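/- arXiv:math/0310292 — 3 statements merged into one kernel-verified Lean document; each statement's English description precedes it below -/
import Mathlib

section
/- Let (X, 𝒰) be a Hausdorff uniform space whose uniformity 𝒰 is generated by an associated family of pseudometrics {d_i : i ∈ I}, and let T : X → X be a T-orbitally continuous self-map such that X is T-orbitally complete. Assume that for real numbers b_i, c_i with 0 < b_i + c_i < 1, for all i ∈ I and all x, y ∈ X: min{ d_i(Tx,Ty), d_i(x,Tx), d_i(y,Ty) } − min{ d_i(x,Ty), d_i(y,Tx) } ≤ b_i·d_i(x,Tx) + c_i·d_i(x,y). Then for each x ∈ X the sequence of iterates {T^n x} converges to a fixed point of T. -/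
/-!
Fix one pseudometric `d` of the family and let `s n = d (Tⁿ x) (Tⁿ⁺¹ x)`. When `d y (T x) = 0`
the contractive condition collapses to `min (d x (T x)) (d y (T y)) ≤ (b + c) * d x (T x)`.
Taking `x := Tⁿ x` and `y := Tᵐ x`, where all terms of `s` strictly between `n` and `m` vanish,
shows that every positive term of `s` bounds the next positive one by the factor `b + c < 1`.
Zero terms need not propagate, since `d` is only a pseudometric, but this is enough for `s` to
be summable. So the orbit is Cauchy for every `d`, hence in the uniformity; orbital completeness
provides a limit `z`, and orbital continuity with uniqueness of limits gives `T z = z`.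
-/

open Filter Set Topology

theorem sum_range_le_div_of_next_pos_le {s : ℕ → ℝ} {k : ℝ} (hk : k < 1)
    (hnext : ∀ n m, n < m → 0 < s n → (∀ j ∈ Ioo n m, s j = 0) → s m ≤ k * s n)
    (hs : ∀ n, 0 ≤ s n) (L n : ℕ) {a : ℝ}
    (ha : ∀ m, n ≤ m → (∀ j ∈ Ico n m, s j = 0) → s m ≤ a) :
    ∑ j ∈ Finset.range L, s (j + n) ≤ a / (1 - k) := by
  have hk' : 0 < 1 - k := sub_pos.2 hk
  induction L generalizing n a with
  | zero => simpa using div_nonneg ((hs n).trans (ha n le_rfl (by simp))) hk'.le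
  | succ L ih =>
    rw [Finset.sum_range_succ', zero_add]
    simp only [add_right_comm _ 1 n]
    have hsn : s n ≤ a := ha n le_rfl (by simp)
    rcases (hs n).lt_or_eq with hpos | hzero
    · have htail := ih (n + 1) (a := k * s n) fun m hm hzero =>
        hnext n m hm hpos fun j hj => hzero j ⟨hj.1, hj.2⟩
      calc ∑ j ∈ Finset.range L, s (j + (n + 1)) + s n
          ≤ k * s n / (1 - k) + s n := by gcongr
        _ = s n / (1 - k) := by field_simp; ring
        _ ≤ a / (1 - k) := by gcongr
    · have htail := ih (n + 1) (a := a) fun m hm hzero' =>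
        ha m (by omega) fun j hj =>
          (eq_or_lt_of_le hj.1).elim (fun h => h ▸ hzero.symm) fun h => hzero' j ⟨h, hj.2⟩
      rw [← hzero, add_zero]
      exact htail

theorem summable_of_next_pos_le {s : ℕ → ℝ} {k : ℝ} (hk : k < 1)
    (hnext : ∀ n m, n < m → 0 < s n → (∀ j ∈ Ioo n m, s j = 0) → s m ≤ k * s n)
    (hs : ∀ n, 0 ≤ s n) : Summable s := by
  by_cases hzero : ∀ n, s n = 0
  · simp [funext hzero]
  obtain ⟨N, hN⟩ := not_forall.1 hzero
  refine (summable_nat_add_iff (N + 1)).1 <|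
    summable_of_sum_range_le (fun n => hs _) fun L =>
      sum_range_le_div_of_next_pos_le hk hnext hs L (N + 1) fun m hm hzero =>
        hnext N m hm ((hs N).lt_of_ne' hN) fun j hj => hzero j ⟨hj.1, hj.2⟩

structure IsPseudometric {X : Type*} (d : X → X → ℝ) : Prop where
  refl : ∀ x, d x x = 0
  symm : ∀ x y, d x y = d y x
  triangle : ∀ x y z, d x z ≤ d x y + d y z

namespace IsPseudometric

variable {X : Type*} {d : X → X → ℝ}

theorem nonneg (hd : IsPseudometric d) (x y : X) : 0 ≤ d x y := by
  have := hd.triangle x y x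
  rw [hd.refl, hd.symm y x] at this
  linarith

theorem dist_le_sum_Ico (hd : IsPseudometric d) (u : ℕ → X) {p q : ℕ} (hpq : p ≤ q) :
    d (u p) (u q) ≤ ∑ j ∈ Finset.Ico p q, d (u j) (u (j + 1)) := by
  induction q, hpq using Nat.le_induction with
  | base => simp [hd.refl]
  | succ q hpq ih =>
    rw [Finset.sum_Ico_succ_top hpq]
    exact (hd.triangle _ (u q) _).trans (by gcongr)

theorem exists_forall_dist_lt_of_summable (hd : IsPseudometric d) {u : ℕ → X}
    (hu : Summable fun n => d (u n) (u (n + 1))) {ε : ℝ} (hε : 0 < ε) :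
    ∃ N, ∀ p q, N ≤ p → N ≤ q → d (u p) (u q) < ε := by
  obtain ⟨N, hN⟩ := Metric.cauchySeq_iff.1 hu.tendsto_sum_tsum_nat.cauchySeq ε hε
  have hle : ∀ p q, N ≤ p → N ≤ q → p ≤ q → d (u p) (u q) < ε := fun p q hp hq hpq =>
    calc d (u p) (u q) ≤ ∑ j ∈ Finset.Ico p q, d (u j) (u (j + 1)) := hd.dist_le_sum_Ico u hpq
      _ = ∑ j ∈ Finset.range q, d (u j) (u (j + 1)) -
          ∑ j ∈ Finset.range p, d (u j) (u (j + 1)) := Finset.sum_Ico_eq_sub _ hpq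
      _ ≤ dist (∑ j ∈ Finset.range q, d (u j) (u (j + 1)))
          (∑ j ∈ Finset.range p, d (u j) (u (j + 1))) := le_abs_self _
      _ < ε := hN q hq p hp
  refine ⟨N, fun p q hp hq => ?_⟩
  rcases le_total p q with hpq | hqp
  · exact hle p q hp hq hpq
  · rw [hd.symm]
    exact hle q p hq hp hqp

section Contraction

variable {T : X → X} {b c : ℝ}

theorem min_le_of_dist_apply_eq_zero (hd : IsPseudometric d)
    (hT : ∀ x y, min (min (d (T x) (T y)) (d x (T x))) (d y (T y))
      - min (d x (T y)) (d y (T x)) ≤ b * d x (T x) + c * d x y) {x y : X}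
    (hxy : d y (T x) = 0) : min (d x (T x)) (d y (T y)) ≤ (b + c) * d x (T x) := by
  have hdist : d x y = d x (T x) := le_antisymm
    (by simpa [hd.symm (T x), hxy] using hd.triangle x (T x) y)
    (by simpa [hxy] using hd.triangle x y (T x))
  have hTy : d y (T y) ≤ d (T x) (T y) := by
    simpa [hxy] using hd.triangle y (T x) (T y)
  have hmin : min (d x (T y)) (d y (T x)) ≤ 0 := hxy ▸ min_le_right _ _
  have hTxy := hT x y
  rw [hdist] at hTxy
  calc min (d x (T x)) (d y (T y))
      ≤ min (min (d (T x) (T y)) (d x (T x))) (d y (T y)) :=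
        le_min (le_min ((min_le_right _ _).trans hTy) (min_le_left _ _)) (min_le_right _ _)
    _ ≤ (b + c) * d x (T x) := by linarith

theorem orbit_dist_le_of_Ioo_eq_zero (hd : IsPseudometric d)
    (hT : ∀ x y, min (min (d (T x) (T y)) (d x (T x))) (d y (T y))
      - min (d x (T y)) (d y (T x)) ≤ b * d x (T x) + c * d x y) (hbc : b + c < 1) (x : X)
    {n m : ℕ} (hnm : n < m) (hpos : 0 < d (T^[n] x) (T^[n + 1] x))
    (hzero : ∀ j ∈ Ioo n m, d (T^[j] x) (T^[j + 1] x) = 0) :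
    d (T^[m] x) (T^[m + 1] x) ≤ (b + c) * d (T^[n] x) (T^[n + 1] x) := by
  have hm : d (T^[m] x) (T (T^[n] x)) = 0 := by
    refine le_antisymm ?_ (hd.nonneg _ _)
    rw [hd.symm, ← Function.iterate_succ_apply' T n x]
    calc d (T^[n + 1] x) (T^[m] x)
        ≤ ∑ j ∈ Finset.Ico (n + 1) m, d (T^[j] x) (T^[j + 1] x) :=
          hd.dist_le_sum_Ico (fun j => T^[j] x) hnm
      _ = 0 := Finset.sum_eq_zero fun j hj => hzero j (by simp at hj ⊢; omega)
  have hmin := hd.min_le_of_dist_apply_eq_zero hT hm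
  simp only [← Function.iterate_succ_apply' T] at hmin
  rcases le_total (d (T^[n] x) (T^[n + 1] x)) (d (T^[m] x) (T^[m + 1] x)) with h | h
  · rw [min_eq_left h] at hmin
    nlinarith
  · rwa [min_eq_right h] at hmin

end Contraction

end IsPseudometric

theorem cauchySeq_of_uniformity_eq_iInf {X I : Type*} [UniformSpace X] {d : I → X → X → ℝ}
    (hgen : uniformity X = ⨅ (i : I), ⨅ (ε : ℝ), ⨅ (_ : 0 < ε),
      𝓟 {p : X × X | d i p.1 p.2 < ε})
    {u : ℕ → X} (hu : ∀ i ε, 0 < ε → ∃ N, ∀ p q, N ≤ p → N ≤ q → d i (u p) (u q) < ε) :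
    CauchySeq u := by
  rw [cauchySeq_iff_tendsto, hgen]
  simp only [tendsto_iInf, tendsto_principal]
  exact fun i ε hε => eventually_atTop_prod_self.2 (hu i ε hε)

/-- **Corollary 4.** For an orbitally continuous self-map `T` of a `T`-orbitally
complete Hausdorff uniform space satisfying the condition with `a i = -1`, the
sequence of iterates `{T^n x}` converges to a fixed point of `T` for each `x`. -/
theorem iterates_converge_to_fixed_point
    {X I : Type*} [UniformSpace X] [T2Space X]
    (d : I → X → X → ℝ)
    (hrefl : ∀ i x, d i x x = 0)
    (hsymm : ∀ i x y, d i x y = d i y x)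
    (htri : ∀ i x y z, d i x z ≤ d i x y + d i y z)
    -- the uniformity of `X` is generated by the sub-base `V(i, ε)`:
    (hgen : uniformity X = ⨅ (i : I), ⨅ (ε : ℝ), ⨅ (_ : 0 < ε),
      𝓟 {p : X × X | d i p.1 p.2 < ε})
    (T : X → X)
    -- `T` is orbitally continuous:
    (hTcont : ∀ (x u : X) (n : ℕ → ℕ), StrictMono n →
      Tendsto (fun j => T^[n j] x) Filter.atTop (nhds u) →
      Tendsto (fun j => T (T^[n j] x)) Filter.atTop (nhds (T u)))
    -- `X` is `T`-orbitally complete: every Cauchy filter finer than the filter of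
    -- tails of an orbit of `T` converges:
    (horb : ∀ x : X, ∀ l : Filter X, Cauchy l →
      l ≤ Filter.map (fun n => T^[n] x) Filter.atTop → ∃ z : X, l ≤ nhds z)
    (b c : I → ℝ)
    (hbc : ∀ i, 0 < b i + c i ∧ b i + c i < 1)
    (hcontr : ∀ i : I, ∀ x y : X,
      min (min (d i (T x) (T y)) (d i x (T x))) (d i y (T y))
        - min (d i x (T y)) (d i y (T x))
      ≤ b i * d i x (T x) + c i * d i x y) :
    ∀ x : X, ∃ z : X, T z = z ∧
      Tendsto (fun n => T^[n] x) Filter.atTop (nhds z) := by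
  intro x
  have hd (i : I) : IsPseudometric (d i) := ⟨hrefl i, hsymm i, htri i⟩
  have hsummable (i : I) : Summable fun n => d i (T^[n] x) (T^[n + 1] x) :=
    summable_of_next_pos_le (hbc i).2
      (fun _ _ => (hd i).orbit_dist_le_of_Ioo_eq_zero (hcontr i) (hbc i).2 x)
      fun _ => (hd i).nonneg _ _
  have hcauchy : CauchySeq fun n => T^[n] x := cauchySeq_of_uniformity_eq_iInf hgen
    fun i _ hε => (hd i).exists_forall_dist_lt_of_summable (hsummable i) hε
  obtain ⟨z, hz⟩ := horb x _ hcauchy le_rfl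
  refine ⟨z, tendsto_nhds_unique (hTcont x z id strictMono_id hz) ?_, hz⟩
  simpa only [id, Function.iterate_succ_apply'] using (tendsto_add_atTop_iff_nat 1).2 hz
end

section
/- Let X be a set with a family of pseudometrics {d_i : i ∈ I}, let F : X → 2^X be a multivalued mapping with values in the nonempty closed p*-bounded subsets of X, and suppose the contraction condition of Theorem 1 holds: for some integer r ≥ 1 and real numbers a_i, b_i, c_i with 0 < b_i + c_i < 1, for all i ∈ I and all x, y ∈ X, min{ H_i(Fx,Fy)^r, d_i(x,Fx)·d_i(y,Fy)^{r-1}, d_i(y,Fy)^r } + a_i·min{ d_i(x,Fy), d_i(y,Fx) } ≤ [ b_i·d_i(x,Fx) + c_i·d_i(x,y) ]·d_i(y,Fy)^{r-1}. Let {x_n} be a sequence with x_{n+1} ∈ F x_n and d_i(x_n, x_{n+1}) = d_i(x_n, F x_n) for all n and all i ∈ I, and suppose d_i(x_n, F x_n) > 0 for all n and i. Then for every i ∈ I and every n ≥ 1, d_i(x_n, x_{n+1}) ≤ k_i · d_i(x_{n-1}, x_n), where k_i = b_i + c_i; consequently d_i(x_n, x_{n+1}) ≤ k_i^n · d_i(x_0,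 x_1) for all n. -/
open Filter Set

/-- Distance from a point to a set, relative to a pseudometric `d`. -/
noncomputable def pdist {X : Type*} (d : X → X → ℝ) (x : X) (A : Set X) : ℝ :=
  sInf ((d x) '' A)

/-- Hausdorff pseudometric induced by a pseudometric `d`. -/
noncomputable def hdist {X : Type*} (d : X → X → ℝ) (A B : Set X) : ℝ :=
  max (sSup ((fun a => pdist d a B) '' A)) (sSup ((fun b => pdist d b A) '' B))

/-- A set is `p*`-bounded for the family of pseudometrics `d` if the distances between
its points are uniformly bounded over all indices. -/
def pstarBounded {X I : Type*} (d : I → X → X → ℝ) (A : Set X) : Prop :=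
  ∃ M : ℝ, ∀ i : I, ∀ x ∈ A, ∀ y ∈ A, d i x y ≤ M


/-!
Put `x = x_n`, `y = x_{n+1}` in the contraction condition and write `A = d(x_n, x_{n+1})`,
`D = d(x_{n+1}, x_{n+2})`. Since `x_{n+1} ∈ F x_n`, the `a_i`-term vanishes, and
`H_i(F x_n, F x_{n+1}) ≥ d_i(x_{n+1}, F x_{n+1}) = D`, so the condition reduces to
`min(A, D) · D^{r-1} ≤ k_i · A · D^{r-1}`. As `k_i < 1`, the minimum cannot be `A`; hence `D ≤ k_i A`.
-/

section Pseudometric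

variable {X : Type*} {d : X → X → ℝ}

lemma nonneg_of_pseudometric (hrefl : ∀ x, d x x = 0) (hsymm : ∀ x y, d x y = d y x)
    (htri : ∀ x y z, d x z ≤ d x y + d y z) (x y : X) : 0 ≤ d x y := by
  linarith [htri x y x, hrefl x, hsymm x y]

variable (hd : ∀ x y, 0 ≤ d x y)
include hd

lemma pdist_nonneg (x : X) (A : Set X) : 0 ≤ pdist d x A :=
  Real.sInf_nonneg (by rintro _ ⟨a, -, rfl⟩; exact hd x a)

lemma pdist_le_of_mem {x a : X} {A : Set X} (ha : a ∈ A) : pdist d x A ≤ d x a :=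
  csInf_le ⟨0, by rintro _ ⟨a', -, rfl⟩; exact hd x a'⟩ ⟨a, ha, rfl⟩

lemma pdist_eq_zero_of_mem (hrefl : ∀ x, d x x = 0) {x : X} {A : Set X} (hx : x ∈ A) :
    pdist d x A = 0 :=
  le_antisymm ((pdist_le_of_mem hd hx).trans_eq (hrefl x)) (pdist_nonneg hd x A)

lemma pdist_le_hdist (htri : ∀ x y z, d x z ≤ d x y + d y z) {M : ℝ} {A B : Set X}
    (hA : ∀ a ∈ A, ∀ a' ∈ A, d a a' ≤ M) {b : X} (hb : b ∈ B) {a : X} (ha : a ∈ A) :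
    pdist d a B ≤ hdist d A B := by
  have hbdd : BddAbove ((fun a => pdist d a B) '' A) := by
    refine ⟨M + d a b, ?_⟩
    rintro _ ⟨a', ha', rfl⟩
    calc pdist d a' B ≤ d a' b := pdist_le_of_mem hd hb
      _ ≤ d a' a + d a b := htri a' a b
      _ ≤ M + d a b := by linarith [hA a' ha' a ha]
  exact (le_csSup hbdd ⟨a, ha, rfl⟩).trans (le_max_left _ _)

end Pseudometric

lemma le_mul_of_min_pow_le {A D H k : ℝ} {r : ℕ} (hr : 1 ≤ r) (hA : 0 < A) (hD : 0 < D)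
    (hDH : D ≤ H) (hk : k < 1)
    (h : min (min (H ^ r) (A * D ^ (r - 1))) (D ^ r) ≤ k * A * D ^ (r - 1)) : D ≤ k * A := by
  have hDr : D ^ r = D * D ^ (r - 1) := by rw [← pow_succ', Nat.sub_add_cancel hr]
  have hpow : 0 < D ^ (r - 1) := pow_pos hD _
  have hmin : min A D * D ^ (r - 1) ≤ k * A * D ^ (r - 1) := by
    rw [min_mul_of_nonneg _ _ hpow.le, ← hDr]
    refine le_trans (le_min ?_ (min_le_right _ _)) h
    exact le_min ((min_le_right _ _).trans (hDr ▸ pow_le_pow_left₀ hD.le hDH r)) (min_le_left _ _)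
  have hkA : min A D ≤ k * A := le_of_mul_le_mul_right hmin hpow
  rcases min_choice A D with hAD | hAD <;> rw [hAD] at hkA
  · nlinarith
  · exact hkA

lemma dist_le_mul_of_contraction {X : Type*} {d : X → X → ℝ} (hrefl : ∀ x, d x x = 0)
    (hsymm : ∀ x y, d x y = d y x) (htri : ∀ x y z, d x z ≤ d x y + d y z)
    {F : X → Set X} {r : ℕ} (hr : 1 ≤ r) {a b c : ℝ} (hbc : b + c < 1) {p q w : X}
    (hcontr : min (min ((hdist d (F p) (F q)) ^ r) (pdist d p (F p) * (pdist d q (F q)) ^ (r - 1)))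
          ((pdist d q (F q)) ^ r) + a * min (pdist d p (F q)) (pdist d q (F p))
        ≤ (b * pdist d p (F p) + c * d p q) * (pdist d q (F q)) ^ (r - 1))
    {M : ℝ} (hbd : ∀ y ∈ F p, ∀ z ∈ F p, d y z ≤ M) (hq : q ∈ F p) (hw : w ∈ F q)
    (hpq : d p q = pdist d p (F p)) (hqw : d q w = pdist d q (F q))
    (hpq_pos : 0 < d p q) (hqw_pos : 0 < d q w) :
    d q w ≤ (b + c) * d p q := by
  have hd := nonneg_of_pseudometric hrefl hsymm htri
  have hzero : pdist d q (F p) = 0 := pdist_eq_zero_of_mem hd hrefl hq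
  have hH : d q w ≤ hdist d (F p) (F q) := hqw ▸ pdist_le_hdist hd htri hbd hw hq
  rw [← hpq, ← hqw, hzero, min_eq_right (pdist_nonneg hd _ _), mul_zero, add_zero,
    ← add_mul] at hcontr
  exact le_mul_of_min_pow_le hr hpq_pos hqw_pos hH hbc hcontr

theorem orbit_contraction_estimate_general
    {X I : Type*}
    (d : I → X → X → ℝ)
    (hrefl : ∀ i x, d i x x = 0)
    (hsymm : ∀ i x y, d i x y = d i y x)
    (htri : ∀ i x y z, d i x z ≤ d i x y + d i y z)
    (F : X → Set X)
    (hbd : ∀ x, pstarBounded d (F x))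
    (r : ℕ) (hr : 1 ≤ r)
    (a b c : I → ℝ)
    (hbc : ∀ i, 0 < b i + c i ∧ b i + c i < 1)
    (hcontr : ∀ i : I, ∀ x y : X,
      min (min ((hdist (d i) (F x) (F y)) ^ r)
            (pdist (d i) x (F x) * (pdist (d i) y (F y)) ^ (r - 1)))
          ((pdist (d i) y (F y)) ^ r)
        + a i * min (pdist (d i) x (F y)) (pdist (d i) y (F x))
      ≤ (b i * pdist (d i) x (F x) + c i * d i x y) *
          (pdist (d i) y (F y)) ^ (r - 1))
    (x : ℕ → X)
    (horbit : ∀ n : ℕ, x (n + 1) ∈ F (x n))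
    (hmin : ∀ i : I, ∀ n : ℕ, d i (x n) (x (n + 1)) = pdist (d i) (x n) (F (x n)))
    (hpos : ∀ i : I, ∀ n : ℕ, 0 < pdist (d i) (x n) (F (x n))) :
    (∀ i : I, ∀ n : ℕ, 1 ≤ n →
      d i (x n) (x (n + 1)) ≤ (b i + c i) * d i (x (n - 1)) (x n)) ∧
    (∀ i : I, ∀ n : ℕ,
      d i (x n) (x (n + 1)) ≤ (b i + c i) ^ n * d i (x 0) (x 1)) := by
  have hstep : ∀ i n, d i (x (n + 1)) (x (n + 2)) ≤ (b i + c i) * d i (x n) (x (n + 1)) :=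
    fun i n ↦ by
      obtain ⟨M, hM⟩ := hbd (x n)
      exact dist_le_mul_of_contraction (hrefl i) (hsymm i) (htri i) hr (hbc i).2
        (hcontr i (x n) (x (n + 1))) (hM i) (horbit n) (horbit (n + 1)) (hmin i n)
        (hmin i (n + 1)) ((hmin i n).symm ▸ hpos i n) ((hmin i (n + 1)).symm ▸ hpos i (n + 1))
  refine ⟨fun i n hn ↦ ?_, fun i n ↦
    le_geom (u := fun n ↦ d i (x n) (x (n + 1))) (hbc i).1.le n fun m _ ↦ hstep i m⟩
  obtain ⟨m, rfl⟩ := Nat.exists_eq_add_of_le' hn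
  exact hstep i m

/-- The key contraction estimate in the proof of Theorem 1: along an orbit
`x_{n+1} ∈ F x_n` realizing the distances `d_i(x_n, F x_n)`, one has
`d_i(x_n, x_{n+1}) ≤ k_i · d_i(x_{n-1}, x_n)` with `k_i = b_i + c_i`, and hence
`d_i(x_n, x_{n+1}) ≤ k_i^n · d_i(x_0, x_1)`. -/
theorem orbit_contraction_estimate
    {X I : Type*}
    (d : I → X → X → ℝ)
    (hrefl : ∀ i x, d i x x = 0)
    (hsymm : ∀ i x y, d i x y = d i y x)
    (htri : ∀ i x y z, d i x z ≤ d i x y + d i y z)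
    (F : X → Set X)
    (hne : ∀ x, (F x).Nonempty)
    (hbd : ∀ x, pstarBounded d (F x))
    (r : ℕ) (hr : 1 ≤ r)
    (a b c : I → ℝ)
    (hbc : ∀ i, 0 < b i + c i ∧ b i + c i < 1)
    (hcontr : ∀ i : I, ∀ x y : X,
      min (min ((hdist (d i) (F x) (F y)) ^ r)
            (pdist (d i) x (F x) * (pdist (d i) y (F y)) ^ (r - 1)))
          ((pdist (d i) y (F y)) ^ r)
        + a i * min (pdist (d i) x (F y)) (pdist (d i) y (F x))
      ≤ (b i * pdist (d i) x (F x) + c i * d i x y) *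
          (pdist (d i) y (F y)) ^ (r - 1))
    (x : ℕ → X)
    (horbit : ∀ n : ℕ, x (n + 1) ∈ F (x n))
    (hmin : ∀ i : I, ∀ n : ℕ, d i (x n) (x (n + 1)) = pdist (d i) (x n) (F (x n)))
    (hpos : ∀ i : I, ∀ n : ℕ, 0 < pdist (d i) (x n) (F (x n))) :
    (∀ i : I, ∀ n : ℕ, 1 ≤ n →
      d i (x n) (x (n + 1)) ≤ (b i + c i) * d i (x (n - 1)) (x n)) ∧
    (∀ i : I, ∀ n : ℕ,
      d i (x n) (x (n + 1)) ≤ (b i + c i) ^ n * d i (x 0) (x 1)) :=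
  orbit_contraction_estimate_general d hrefl hsymm htri F hbd r hr a b c hbc hcontr x horbit hmin
    hpos
end

section
/- Let (X, d) be a metric space and let T : X → X be a T-orbitally continuous mapping such that X is T-orbitally complete (every Cauchy subsequence of an orbit of T converges in X). Assume that for real numbers b, c with 0 < b + c < 1, for all x, y ∈ X: min{ d(Tx,Ty), d(x,Tx), d(y,Ty) } − min{ d(x,Ty), d(y,Tx) } ≤ b·d(x,Tx) + c·d(x,y). Then for each x ∈ X the sequence of iterates {T^n x} converges to a fixed point of T. -/
/-!
Taking `y = T x` in the contractive condition kills the subtracted minimum (it contains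
`dist (T x) (T x) = 0`), leaving `min (dist (T x) (T² x)) (dist x (T x)) ≤ (b + c) * dist x (T x)`.
Since `b + c < 1`, the minimum can only be `dist x (T x)` when that distance vanishes, so in
every case `dist (T x) (T² x) ≤ (b + c) * dist x (T x)`. Consecutive distances along an orbit
thus decay geometrically, the orbit is Cauchy, orbital completeness gives a limit, and orbital
continuity makes that limit a fixed point.
-/

open Filter Topology Function

theorem dist_apply_apply_le_of_min_le {X : Type*} [MetricSpace X] {T : X → X} {r : ℝ}
    (hr : r < 1) {y : X}
    (h : min (dist (T y) (T (T y))) (dist y (T y)) ≤ r * dist y (T y)) :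
    dist (T y) (T (T y)) ≤ r * dist y (T y) := by
  rcases le_total (dist (T y) (T (T y))) (dist y (T y)) with hle | hle
  · rwa [min_eq_left hle] at h
  · rw [min_eq_right hle] at h
    have hfix : dist y (T y) = 0 := by nlinarith [dist_nonneg (x := y) (y := T y)]
    rw [(dist_eq_zero.mp hfix).symm, dist_self, hfix, mul_zero]

theorem dist_iterate_succ_le_geometric {X : Type*} [PseudoMetricSpace X] {T : X → X} {r : ℝ}
    (hr : 0 ≤ r) (hstep : ∀ y, dist (T y) (T (T y)) ≤ r * dist y (T y)) (x : X) (n : ℕ) :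
    dist (T^[n] x) (T^[n + 1] x) ≤ dist x (T x) * r ^ n := by
  induction n with
  | zero => simp
  | succ n ih =>
    calc dist (T^[n + 1] x) (T^[n + 1 + 1] x)
        = dist (T (T^[n] x)) (T (T (T^[n] x))) := by
          simp only [iterate_succ_apply']
      _ ≤ r * dist (T^[n] x) (T (T^[n] x)) := hstep _
      _ = r * dist (T^[n] x) (T^[n + 1] x) := by rw [iterate_succ_apply']
      _ ≤ r * (dist x (T x) * r ^ n) := mul_le_mul_of_nonneg_left ih hr
      _ = dist x (T x) * r ^ (n + 1) := by ring

theorem cauchySeq_iterate_of_dist_apply_apply_le {X : Type*} [PseudoMetricSpace X]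
    {T : X → X} {r : ℝ} (hr0 : 0 ≤ r) (hr1 : r < 1)
    (hstep : ∀ y, dist (T y) (T (T y)) ≤ r * dist y (T y)) (x : X) :
    CauchySeq fun n => T^[n] x :=
  cauchySeq_of_le_geometric r (dist x (T x)) hr1 (dist_iterate_succ_le_geometric hr0 hstep x)

theorem isFixedPt_of_tendsto_iterate_of_tendsto_apply {X : Type*} [TopologicalSpace X]
    [T2Space X] {T : X → X} {x z : X} (hz : Tendsto (fun n => T^[n] x) atTop (𝓝 z))
    (hTz : Tendsto (fun n => T (T^[n] x)) atTop (𝓝 (T z))) : IsFixedPt T z := by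
  refine tendsto_nhds_unique hTz ?_
  simpa only [iterate_succ_apply'] using (tendsto_add_atTop_iff_nat 1).2 hz

/-- Metric space specialization of Corollary 4 (Corollary 1 of Dhage): for a
`T`-orbitally continuous self-map of a `T`-orbitally complete metric space
satisfying the condition, the iterates `{T^n x}` converge to a fixed point. -/
theorem metric_iterates_converge_to_fixed_point
    {X : Type*} [MetricSpace X]
    (T : X → X)
    -- `T` is orbitally continuous:
    (hTcont : ∀ (x u : X) (n : ℕ → ℕ), StrictMono n →
      Tendsto (fun j => T^[n j] x) Filter.atTop (nhds u) →
      Tendsto (fun j => T (T^[n j] x)) Filter.atTop (nhds (T u)))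
    -- `X` is `T`-orbitally complete: every Cauchy subsequence of an orbit converges:
    (horb : ∀ (x : X) (s : ℕ → ℕ), StrictMono s →
      CauchySeq (fun j => T^[s j] x) →
      ∃ z : X, Tendsto (fun j => T^[s j] x) Filter.atTop (nhds z))
    (b c : ℝ)
    (hbc0 : 0 < b + c) (hbc1 : b + c < 1)
    (hcontr : ∀ x y : X,
      min (min (dist (T x) (T y)) (dist x (T x))) (dist y (T y))
        - min (dist x (T y)) (dist y (T x))
      ≤ b * dist x (T x) + c * dist x y) :
    ∀ x : X, ∃ z : X, T z = z ∧
      Tendsto (fun n => T^[n] x) Filter.atTop (nhds z) := by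
  have hstep : ∀ y, dist (T y) (T (T y)) ≤ (b + c) * dist y (T y) := fun y => by
    refine dist_apply_apply_le_of_min_le hbc1 ?_
    have h := hcontr y (T y)
    rwa [dist_self, min_eq_right dist_nonneg, sub_zero, min_right_comm, min_self, ← add_mul]
      at h
  intro x
  obtain ⟨z, hz⟩ := horb x id strictMono_id
    (cauchySeq_iterate_of_dist_apply_apply_le hbc0.le hbc1 hstep x)
  exact ⟨z, isFixedPt_of_tendsto_iterate_of_tendsto_apply hz (hTcont x z id strictMono_id hz), hz⟩
end
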